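/- arXiv:0910.2907 — 2 statements merged into one kernel-verified Lean document; each statement's English description precedes it below -/
import Mathlib

section
/- Let p ≠ 2 be a prime with p ≡ 2 or 3 (mod 5) such that ν_p(F_{α(p)}) = 1. Then for all integers n ≥ 0, 0 ≤ i ≤ p − 1, and 0 ≤ j ≤ p − 2: if i ≤ j − 1 then ν_p(F_{p(pn+i)+j+1}) = ν_p(F_{pn + (i − j + p − 1) + 1}); if i = j then ν_p(F_{p(pn+i)+j+1}) + ν_p(F_{n+1}) = ν_p(F_{p(n+1)}); if i = j + 1 then ν_p(F_{p(pn+i)+j+1}) = ν_p(F_{p²n+p+1}); and if i ≥ j + 2 then ν_p(F_{p(pn+i)+j+1}) = ν_p(F_{pn + (i − j − 2) + 1}). -/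
/-- The restricted period (rank of apparition) of the Fibonacci sequence modulo `p`:
the least positive `n` such that `p ∣ F n`. -/
noncomputable def fibAlpha (p : ℕ) : ℕ := sInf {n | 0 < n ∧ p ∣ Nat.fib n}

namespace FibShiftAux

open Nat Polynomial

lemma aux2 : ¬ IsSquare ((((2:ℕ):ℤ)) : ZMod 5) := by
  have h5 : ((((2:ℕ):ℤ)) : ZMod 5) = (2 : ZMod 5) := by norm_cast
  rw [h5]; decide

lemma aux3 : ¬ IsSquare ((((3:ℕ):ℤ)) : ZMod 5) := by
  have h5 : ((((3:ℕ):ℤ)) : ZMod 5) = (3 : ZMod 5) := by norm_cast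
  rw [h5]; decide

lemma five_not_square {p : ℕ} [hpf : Fact p.Prime] (hp2 : p ≠ 2)
    (h : p % 5 = 2 ∨ p % 5 = 3) : ¬ IsSquare (5 : ZMod p) := by
  haveI : Fact (Nat.Prime 5) := ⟨by norm_num⟩
  have h1 : legendreSym p 5 = legendreSym 5 p :=
    legendreSym.quadratic_reciprocity_one_mod_four (by norm_num) hp2
  have h2 : legendreSym 5 (p : ℤ) = legendreSym 5 ((p % 5 : ℕ) : ℤ) := by
    rw [legendreSym.mod]; norm_cast
  have h3 : legendreSym 5 ((p % 5 : ℕ) : ℤ) = -1 := by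
    rcases h with h | h
    · rw [h, legendreSym.eq_neg_one_iff]; exact aux2
    · rw [h, legendreSym.eq_neg_one_iff]; exact aux3
  have h4 : legendreSym p 5 = -1 := by rw [h1, h2, h3]
  have h5 := (legendreSym.eq_neg_one_iff' (p := p) (a := 5)).mp (by exact_mod_cast h4)
  simpa using h5


section
variable {p : ℕ} [hpf : Fact p.Prime]

lemma p_dvd_fib_succ (hp2 : p ≠ 2) (hsq : ¬ IsSquare (5 : ZMod p)) (hp5 : p ≠ 5) :
    p ∣ Nat.fib (p + 1) := by
  classical
  set K := ZMod p
  set f : K[X] := X ^ 2 - (X + 1) with hf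
  have hdegX1 : (X + 1 : K[X]).degree < 2 := by
    have : (X + 1 : K[X]).degree ≤ 1 :=
      Polynomial.degree_add_le_of_degree_le (Polynomial.degree_X_le) (by simp)
    exact lt_of_le_of_lt this (by norm_num)
  have hmon : f.Monic := Polynomial.monic_X_pow_sub hdegX1
  have hdeg : f.degree = 2 := by
    rw [hf, Polynomial.degree_sub_eq_left_of_degree_lt] <;> simp [hdegX1]
  set R := AdjoinRoot f
  haveI : Nontrivial R := AdjoinRoot.nontrivial f (by rw [hdeg]; decide)
  have hinj : Function.Injective (AdjoinRoot.of f) := (AdjoinRoot.of f).injective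
  haveI : CharP R p := charP_of_injective_ringHom hinj p
  set ph : R := AdjoinRoot.root f with hph
  have hroot : ph ^ 2 = ph + 1 := by
    have h0 := AdjoinRoot.eval₂_root f
    rw [hf] at h0
    simp only [Polynomial.eval₂_sub, Polynomial.eval₂_add, Polynomial.eval₂_pow,
      Polynomial.eval₂_X, Polynomial.eval₂_one] at h0
    rw [sub_eq_zero] at h0
    exact h0
  have hfib : ∀ n : ℕ, ph ^ (n + 1) = (Nat.fib (n+1) : R) * ph + (Nat.fib n : R) := by
    intro n
    induction n with
    | zero => simp
    | succ n ih =>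
      have h1 : ph ^ (n + 2) = ph ^ (n+1) * ph := by ring
      rw [h1, ih]
      have expand : ((Nat.fib (n+1) : R) * ph + (Nat.fib n : R)) * ph
          = (Nat.fib (n+1) : R) * ph ^ 2 + (Nat.fib n : R) * ph := by ring
      rw [expand, hroot]
      push_cast [Nat.fib_add_two]
      ring
  have h5K : (5 : K) ≠ 0 := by
    intro hc
    have h5c : ((5 : ℕ) : K) = 0 := by exact_mod_cast hc
    rw [ZMod.natCast_eq_zero_iff] at h5c
    exact hp5 ((Nat.prime_dvd_prime_iff_eq hpf.out (by norm_num)).mp h5c)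
  have hodd : p % 2 = 1 := hpf.out.eq_two_or_odd.resolve_left hp2
  set s : K := (5 : K) ^ (p / 2) with hs_def
  have hs2 : s * s = 1 := by
    rw [hs_def, ← pow_add]
    have hpp : p / 2 + p / 2 = p - 1 := by omega
    rw [hpp]
    exact ZMod.pow_card_sub_one_eq_one h5K
  have hsne : s ≠ 1 := fun hc => hsq ((ZMod.euler_criterion p h5K).mpr hc)
  have hs : s = -1 := by
    have hz : (s - 1) * (s + 1) = 0 := by linear_combination hs2
    rcases mul_eq_zero.mp hz with h' | h'
    · exact absurd (sub_eq_zero.mp h') hsne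
    · exact eq_neg_of_add_eq_zero_left h'
  set tau : R := 2 * ph - 1 with htau_def
  have htau2 : tau ^ 2 = (5 : R) := by
    have h4 : tau ^ 2 = 4 * ph ^ 2 - 4 * ph + 1 := by rw [htau_def]; ring
    rw [h4, hroot]; ring
  have hofs : AdjoinRoot.of f s = (5 : R) ^ (p / 2) := by
    rw [hs_def, map_pow, map_ofNat]
  have htaup1 : tau ^ p = AdjoinRoot.of f s * tau := by
    have hsplit : tau ^ p = (tau ^ 2) ^ (p / 2) * tau := by
      rw [← pow_mul, ← pow_succ]
      congr 1
      omega
    rw [hsplit, htau2, hofs]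
  have htaup2 : tau ^ p = 2 * ph ^ p - 1 := by
    rw [htau_def, sub_pow_char, mul_pow, one_pow]
    congr 1
    rw [(map_ofNat (AdjoinRoot.of f) 2).symm, ← map_pow, ZMod.pow_card]
  have h2K : (2 : K) ≠ 0 := by
    intro hc
    have h2c : ((2 : ℕ) : K) = 0 := by exact_mod_cast hc
    rw [ZMod.natCast_eq_zero_iff] at h2c
    exact hp2 ((Nat.prime_dvd_prime_iff_eq hpf.out (by norm_num)).mp h2c)
  have h2unit : IsUnit (2 : R) := by
    have hu : IsUnit (2 : K) := h2K.isUnit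
    have hu2 := hu.map (AdjoinRoot.of f)
    rwa [map_ofNat] at hu2
  have hphp : ph ^ p = 1 - ph := by
    have hofneg : AdjoinRoot.of f s * tau = -tau := by rw [hs]; simp
    have hkey : (2 : R) * (ph ^ p - (1 - ph)) = 0 := by
      have heq := htaup1.symm.trans htaup2
      rw [hofneg, htau_def] at heq
      linear_combination -heq
    have hz := (h2unit.mul_right_eq_zero).mp hkey
    exact sub_eq_zero.mp hz
  have hp1 : ph ^ (p + 1) = -1 := by
    have h1 : ph ^ (p + 1) = ph ^ p * ph := by ring
    rw [h1, hphp]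
    linear_combination -hroot
  have heq : (Nat.fib (p+1) : R) * ph + ((Nat.fib p : R) + 1) = 0 := by
    have hf2 := hfib p
    rw [hp1] at hf2
    linear_combination -hf2
  by_contra hnd
  have hc : (Nat.fib (p+1) : K) ≠ 0 := by
    rwa [Ne, ZMod.natCast_eq_zero_iff]
  set c : K := (Nat.fib (p+1) : K) with hc_def
  set a : K := c⁻¹ * (-(1 + (Nat.fib p : K))) with ha_def
  have hofc : AdjoinRoot.of f c = (Nat.fib (p+1) : R) := by
    rw [hc_def, map_natCast]
  have hcof : AdjoinRoot.of f c * ph = AdjoinRoot.of f (-(1 + (Nat.fib p : K))) := by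
    rw [hofc, map_neg, map_add, map_one, map_natCast]
    linear_combination heq
  have hpha : ph = AdjoinRoot.of f a := by
    have h1 : AdjoinRoot.of f (c⁻¹) * (AdjoinRoot.of f c * ph) = ph := by
      rw [← mul_assoc, ← map_mul, inv_mul_cancel₀ hc, map_one, one_mul]
    rw [hcof, ← map_mul] at h1
    rw [← h1, ha_def]
  have ha : a ^ 2 = a + 1 := by
    apply hinj
    rw [map_pow, map_add, map_one, ← hpha, hroot]
  exact hsq ⟨2 * a - 1, by linear_combination (-4 : K) * ha⟩


lemma fib_expansion (M r : ℕ) : ∃ e g : ℤ,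
    (fib ((M+1)*(r+2)) : ℤ) = (r+2) * fib (M+1) * fib M ^ (r+1)
        + ((r+2).choose 2) * (fib (M+1):ℤ)^2 * fib M ^ r + e * (fib (M+1):ℤ)^3 ∧
    (fib ((M+1)*(r+2)+1) : ℤ) = (fib M:ℤ)^(r+2) + (r+2) * fib (M+1) * fib M^(r+1)
        + g * (fib (M+1):ℤ)^2 := by
  induction r with
  | zero =>
    refine ⟨0, 2, ?_, ?_⟩
    · rw [show (M+1)*(0+2) = (M+1) + M + 1 by ring, Nat.fib_add]
      push_cast [Nat.fib_add_two]
      norm_num [Nat.choose]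
      ring
    · rw [show (M+1)*(0+2)+1 = (M+1) + (M+1) + 1 by ring, Nat.fib_add]
      push_cast [Nat.fib_add_two]
      ring
  | succ r ih =>
    obtain ⟨e, g, h1, h2⟩ := ih
    have hC : (((r+1+2).choose 2 : ℕ) : ℤ) = ((r+2).choose 2 : ℕ) + (r + 2) := by
      rw [show r + 1 + 2 = (r+2) + 1 by ring, Nat.choose_succ_succ (r+2) 1, Nat.choose_one_right]
      push_cast
      ring
    refine ⟨e * fib M + g, 2*(r+2) * (fib M:ℤ)^(r+1) + ((r+2).choose 2) * (fib (M+1):ℤ) * (fib M:ℤ)^r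
      + e * (fib (M+1):ℤ)^2 + g * (fib (M+1):ℤ) + g * (fib M:ℤ), ?_, ?_⟩
    · rw [show (M+1)*(r+1+2) = ((M+1)*(r+2)) + M + 1 by ring, Nat.fib_add]
      push_cast
      rw [h1, h2, hC]
      ring
    · rw [show (M+1)*(r+1+2)+1 = ((M+1)*(r+2)) + (M+1) + 1 by ring, Nat.fib_add]
      push_cast [Nat.fib_add_two]
      rw [h1, h2]
      ring

lemma padic_eq_of {p : ℕ} [hpf : Fact p.Prime] {x : ℕ} {t s : ℤ} (w : ℕ)
    (hx : (x:ℤ) = t + s) (h1 : (p:ℤ)^w ∣ t) (h2 : ¬ (p:ℤ)^(w+1) ∣ t)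
    (h3 : (p:ℤ)^(w+1) ∣ s) : padicValNat p x = w := by
  have hxne : x ≠ 0 := by
    rintro rfl
    apply h2
    have ht : t = -s := by push_cast at hx; linarith
    rw [ht]
    exact dvd_neg.mpr h3
  have hd1 : (p:ℤ)^w ∣ (x:ℤ) := by
    rw [hx]
    exact dvd_add h1 ((pow_dvd_pow _ (Nat.le_succ w)).trans h3)
  have hd2 : ¬ (p:ℤ)^(w+1) ∣ (x:ℤ) := by
    intro hc
    apply h2
    have ht : t = (x:ℤ) - s := by linarith [hx]
    rw [ht]
    exact dvd_sub hc h3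
  have hn1 : p^w ∣ x := by exact_mod_cast hd1
  have hn2 : ¬ p^(w+1) ∣ x := fun hc => hd2 (by exact_mod_cast hc)
  have l1 := (padicValNat_dvd_iff_le hxne).mp hn1
  have l2 : ¬ (w + 1 ≤ padicValNat p x) := fun hh => hn2 ((padicValNat_dvd_iff_le hxne).mpr hh)
  omega

section
variable {p : ℕ} [hpf : Fact p.Prime]

lemma not_p_dvd_fib_pred {M : ℕ} (hdvd : p ∣ fib (M+1)) : ¬ p ∣ fib M := by
  intro hc
  have hcop := Nat.fib_coprime_fib_succ M
  have hd : p ∣ Nat.gcd (fib M) (fib (M+1)) := Nat.dvd_gcd hc hdvd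
  rw [Nat.Coprime] at hcop
  rw [hcop, Nat.dvd_one] at hd
  exact hpf.out.one_lt.ne' hd

lemma padic_fib_mul_coprime {m q : ℕ}
    (hdvd : p ∣ fib m) (hm : 0 < m) (hq2 : 2 ≤ q) (hpq : ¬ p ∣ q) :
    padicValNat p (fib (m * q)) = padicValNat p (fib m) := by
  obtain ⟨M, rfl⟩ : ∃ M, m = M + 1 := ⟨m - 1, by omega⟩
  obtain ⟨r, rfl⟩ : ∃ r, q = r + 2 := ⟨q - 2, by omega⟩
  obtain ⟨e, g, h1, -⟩ := fib_expansion M r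
  set v := padicValNat p (fib (M+1)) with hv
  have hafib : fib (M+1) ≠ 0 := (fib_pos.mpr (succ_pos M)).ne'
  have hv1 : 1 ≤ v := (padicValNat_dvd_iff_le hafib).mp (by simpa using hdvd)
  have hb : ¬ p ∣ fib M := not_p_dvd_fib_pred hdvd
  have hpv : (p:ℤ)^v ∣ (fib (M+1) : ℤ) := by
    exact_mod_cast Int.natCast_dvd_natCast.mpr (pow_padicValNat_dvd (p := p) (n := fib (M+1)))
  rw [add_assoc] at h1
  apply padic_eq_of v h1
  · exact (hpv.mul_left _).mul_right _
  · intro hc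
    have hcn : p^(v+1) ∣ (r+2) * fib (M+1) * fib M ^ (r+1) := by
      have : ((((r+2) * fib (M+1) * fib M ^ (r+1)) : ℕ) : ℤ)
          = ((r+2) : ℤ) * fib (M+1) * fib M ^ (r+1) := by push_cast; ring
      exact_mod_cast this ▸ hc
    have hre : (r+2) * fib (M+1) * fib M ^ (r+1) = fib (M+1) * ((r+2) * fib M ^ (r+1)) := by ring
    rw [hre] at hcn
    have hcop : Nat.Coprime (p^(v+1)) ((r+2) * fib M ^ (r+1)) := by
      apply Nat.Coprime.pow_left
      rw [hpf.out.coprime_iff_not_dvd]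
      intro hd
      rcases hpf.out.dvd_mul.mp hd with hd | hd
      · exact hpq hd
      · exact hb (hpf.out.dvd_of_dvd_pow hd)
    have := (Nat.Coprime.dvd_of_dvd_mul_right hcop) hcn
    exact pow_succ_padicValNat_not_dvd hafib this
  · have hsq : (p:ℤ)^(v+1) ∣ (fib (M+1) : ℤ)^2 := by
      calc (p:ℤ)^(v+1) ∣ (p:ℤ)^(2*v) := pow_dvd_pow _ (by omega)
      _ = ((p:ℤ)^v)^2 := by rw [← pow_mul, mul_comm]
      _ ∣ _ := pow_dvd_pow_of_dvd hpv 2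
    apply dvd_add
    · exact (hsq.mul_left _).mul_right _
    · have h23 : (fib (M+1):ℤ)^2 ∣ (fib (M+1):ℤ)^3 := pow_dvd_pow _ (by norm_num)
      exact (hsq.trans h23).mul_left e

lemma padic_fib_mul_self {m : ℕ} (hp2 : p ≠ 2)
    (hdvd : p ∣ fib m) (hm : 0 < m) :
    padicValNat p (fib (m * p)) = padicValNat p (fib m) + 1 := by
  obtain ⟨M, rfl⟩ : ∃ M, m = M + 1 := ⟨m - 1, by omega⟩
  have hp3 : 3 ≤ p := by
    rcases hpf.out.eq_two_or_odd with h | h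
    · exact absurd h hp2
    · have := hpf.out.two_le; omega
  obtain ⟨r, hr⟩ : ∃ r, p = r + 2 := ⟨p - 2, by omega⟩
  obtain ⟨e, g, h1, -⟩ := fib_expansion M r
  rw [← hr] at h1
  have hrc : ((r:ℤ) + 2) = (p : ℤ) := by rw [hr]; push_cast; ring
  rw [hrc] at h1
  set v := padicValNat p (fib (M+1)) with hv
  have hafib : fib (M+1) ≠ 0 := (fib_pos.mpr (succ_pos M)).ne'
  have hv1 : 1 ≤ v := (padicValNat_dvd_iff_le hafib).mp (by simpa using hdvd)
  have hb : ¬ p ∣ fib M := not_p_dvd_fib_pred hdvd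
  have hpv : (p:ℤ)^v ∣ (fib (M+1) : ℤ) := by
    exact_mod_cast Int.natCast_dvd_natCast.mpr (pow_padicValNat_dvd (p := p) (n := fib (M+1)))
  rw [add_assoc] at h1
  apply padic_eq_of (v+1) h1
  · have : (p:ℤ)^(v+1) = (p:ℤ) * (p:ℤ)^v := by ring
    rw [this]
    exact ((mul_dvd_mul (dvd_refl (p:ℤ)) hpv).mul_right _)
  · intro hc
    have hcn : p^(v+2) ∣ (p : ℕ) * fib (M+1) * fib M ^ (r+1) := by
      have hcast : (((p * fib (M+1) * fib M ^ (r+1)) : ℕ) : ℤ)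
          = ((p : ℕ) : ℤ) * fib (M+1) * fib M ^ (r+1) := by push_cast; ring
      have : ((p:ℕ):ℤ)^(v+1+1) ∣ ((p:ℕ):ℤ) * fib (M+1) * fib M ^ (r+1) := hc
      exact_mod_cast hcast ▸ this
    have hre : (p : ℕ) * fib (M+1) * fib M ^ (r+1) = p * (fib (M+1) * fib M ^ (r+1)) := by ring
    have hpow : p^(v+2) = p * p^(v+1) := by ring
    rw [hre, hpow] at hcn
    have hcn2 : p^(v+1) ∣ fib (M+1) * fib M ^ (r+1) :=
      (Nat.mul_dvd_mul_iff_left hpf.out.pos).mp hcn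
    have hcop : Nat.Coprime (p^(v+1)) (fib M ^ (r+1)) := by
      apply Nat.Coprime.pow
      rw [hpf.out.coprime_iff_not_dvd]
      exact hb
    have := (Nat.Coprime.dvd_of_dvd_mul_right hcop) hcn2
    exact pow_succ_padicValNat_not_dvd hafib this
  · have hsq : (p:ℤ)^(2*v) ∣ (fib (M+1) : ℤ)^2 := by
      rw [mul_comm, pow_mul]
      exact pow_dvd_pow_of_dvd hpv 2
    apply dvd_add
    · have hchoose : (p : ℤ) ∣ ((p.choose 2 : ℕ) : ℤ) :=
        Int.natCast_dvd_natCast.mpr (hpf.out.dvd_choose_self (by norm_num) (by omega))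
      have : (p:ℤ)^(v+2) ∣ (p : ℤ) * (p:ℤ)^(2*v) := by
        have h2 : (p:ℤ) * (p:ℤ)^(2*v) = (p:ℤ)^(2*v+1) := by ring
        rw [h2]
        exact pow_dvd_pow _ (by omega)
      have hterm : (p:ℤ)^(v+2) ∣ ((p.choose 2 : ℕ) : ℤ) * (fib (M+1):ℤ)^2 :=
        this.trans (mul_dvd_mul hchoose hsq)
      rw [hr] at hterm ⊢
      exact hterm.mul_right _
    · have h3 : (p:ℤ)^(v+2) ∣ (fib (M+1) : ℤ)^3 := by
        calc (p:ℤ)^(v+2) ∣ (p:ℤ)^(3*v) := pow_dvd_pow _ (by omega)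
        _ = ((p:ℤ)^v)^3 := by rw [← pow_mul, mul_comm]
        _ ∣ _ := pow_dvd_pow_of_dvd hpv 3
      exact h3.mul_left e


lemma padic_fib_lte (hp2 : p ≠ 2) {m : ℕ} (hdvd : p ∣ fib m) (hm : 0 < m) :
    ∀ k, 0 < k → padicValNat p (fib (m * k)) = padicValNat p (fib m) + padicValNat p k := by
  intro k
  induction k using Nat.strong_induction_on with
  | _ k ih =>
    intro hk
    by_cases hpk : p ∣ k
    · obtain ⟨k', rfl⟩ := hpk
      have hk' : 0 < k' := by
        rcases Nat.eq_zero_or_pos k' with h | h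
        · simp [h] at hk
        · exact h
      have hlt : k' < p * k' := by nlinarith [hpf.out.two_le]
      have hdvd' : p ∣ fib (m * k') := hdvd.trans (Nat.fib_dvd m (m*k') ⟨k', rfl⟩)
      have hmk' : 0 < m * k' := Nat.mul_pos hm hk'
      rw [show m * (p * k') = (m * k') * p by ring, padic_fib_mul_self hp2 hdvd' hmk',
        ih k' hlt hk', padicValNat.mul (hpf.out.pos.ne') hk'.ne', padicValNat.self hpf.out.one_lt]
      omega
    · rcases Nat.lt_or_ge k 2 with hk2 | hk2
      · have : k = 1 := by omega
        subst this
        simp [padicValNat.one]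
      · rw [padic_fib_mul_coprime hdvd hm hk2 hpk, padicValNat.eq_zero_of_not_dvd hpk]
        omega

-- law of apparition
lemma fibAlpha_mem (hne : p ∣ fib (p+1)) :
    0 < fibAlpha p ∧ p ∣ fib (fibAlpha p) := by
  have hmem : (p+1) ∈ {n | 0 < n ∧ p ∣ Nat.fib n} := ⟨Nat.succ_pos p, hne⟩
  exact Nat.sInf_mem (Set.nonempty_of_mem hmem)

lemma fibAlpha_dvd_iff (hne : p ∣ fib (p+1)) {N : ℕ} (hN : 0 < N) :
    p ∣ fib N ↔ fibAlpha p ∣ N := by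
  obtain ⟨hα, hαdvd⟩ := fibAlpha_mem hne
  constructor
  · intro hdN
    have hg : 0 < Nat.gcd (fibAlpha p) N := Nat.gcd_pos_of_pos_right _ hN
    have hdg : p ∣ fib (Nat.gcd (fibAlpha p) N) := by
      rw [Nat.fib_gcd]
      exact Nat.dvd_gcd hαdvd hdN
    have hle : fibAlpha p ≤ Nat.gcd (fibAlpha p) N := Nat.sInf_le ⟨hg, hdg⟩
    have hge : Nat.gcd (fibAlpha p) N ≤ fibAlpha p :=
      Nat.le_of_dvd hα (Nat.gcd_dvd_left _ _)
    have hgeq : Nat.gcd (fibAlpha p) N = fibAlpha p := le_antisymm hge hle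
    rw [← hgeq]
    exact Nat.gcd_dvd_right _ _
  · intro hdN
    exact hαdvd.trans (Nat.fib_dvd _ _ hdN)

lemma fibAlpha_dvd_succ (hne : p ∣ fib (p+1)) : fibAlpha p ∣ p + 1 :=
  (fibAlpha_dvd_iff hne (Nat.succ_pos p)).mp hne

lemma not_p_dvd_fibAlpha (hne : p ∣ fib (p+1)) : ¬ p ∣ fibAlpha p := by
  intro hc
  have h1 : p ∣ p + 1 := hc.trans (fibAlpha_dvd_succ hne)
  have h2 : p ∣ 1 := by
    have h3 := Nat.dvd_sub h1 (dvd_refl p)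
    simpa using h3
  rw [Nat.dvd_one] at h2
  have := hpf.out.two_le
  omega

lemma padic_fib_master (hp2 : p ≠ 2) (hne : p ∣ fib (p+1))
    (hwall : padicValNat p (Nat.fib (fibAlpha p)) = 1)
    {N : ℕ} (hN : 0 < N) :
    padicValNat p (fib N) = if fibAlpha p ∣ N then padicValNat p N + 1 else 0 := by
  obtain ⟨hα, hαdvd⟩ := fibAlpha_mem hne
  split_ifs with hd
  · obtain ⟨k, rfl⟩ := hd
    have hk : 0 < k := by
      rcases Nat.eq_zero_or_pos k with h | h
      · subst h; simp at hN
      · exact h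
    rw [padic_fib_lte hp2 hαdvd hα k hk, hwall,
      padicValNat.mul hα.ne' hk.ne',
      padicValNat.eq_zero_of_not_dvd (not_p_dvd_fibAlpha hne)]
    omega
  · exact padicValNat.eq_zero_of_not_dvd
      (fun hc => hd ((fibAlpha_dvd_iff hne hN).mp hc))


end

end

end FibShiftAux

open FibShiftAux

theorem nup_fib_digit_shift_2_3 (p : ℕ) (hp : p.Prime) (hp2 : p ≠ 2)
    (h : p % 5 = 2 ∨ p % 5 = 3)
    (hwall : padicValNat p (Nat.fib (fibAlpha p)) = 1)
    (n i j : ℕ) (hi : i ≤ p - 1) (hj : j ≤ p - 2) :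
    (i < j →
      padicValNat p (Nat.fib (p * (p * n + i) + j + 1)) =
        padicValNat p (Nat.fib (p * n + (i + (p - 1) - j) + 1))) ∧
    (i = j →
      padicValNat p (Nat.fib (p * (p * n + i) + j + 1)) +
          padicValNat p (Nat.fib (n + 1)) =
        padicValNat p (Nat.fib (p * (n + 1)))) ∧
    (i = j + 1 →
      padicValNat p (Nat.fib (p * (p * n + i) + j + 1)) =
        padicValNat p (Nat.fib (p ^ 2 * n + p + 1))) ∧
    (j + 2 ≤ i →
      padicValNat p (Nat.fib (p * (p * n + i) + j + 1)) =
        padicValNat p (Nat.fib (p * n + (i - j - 2) + 1))) := by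
  haveI hpf : Fact p.Prime := ⟨hp⟩
  have hp5 : p ≠ 5 := by rintro rfl; omega
  have hp3 : 3 ≤ p := by
    have := hp.two_le
    rcases hp.eq_two_or_odd with h2 | hodd
    · exact absurd h2 hp2
    · omega
  have hne : p ∣ Nat.fib (p + 1) := p_dvd_fib_succ hp2 (five_not_square hp2 h) hp5
  have hα1 : fibAlpha p ∣ p + 1 := fibAlpha_dvd_succ hne
  have master := fun {N : ℕ} (hN : 0 < N) => padic_fib_master hp2 hne hwall hN
  -- dvd transfer helpers
  have keysum : ∀ x y c : ℕ, x + y = (p+1) * c → (fibAlpha p ∣ x ↔ fibAlpha p ∣ y) := by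
    intro x y c hsum
    have hs : fibAlpha p ∣ x + y := hα1.trans (Dvd.intro c hsum.symm)
    constructor
    · intro hx
      have h2 := Nat.dvd_sub hs hx
      simpa using h2
    · intro hy
      have h2 := Nat.dvd_sub hs hy
      have h3 : x + y - y = x := by omega
      rwa [h3] at h2
  have keyadd : ∀ x y c : ℕ, x = y + (p+1) * c → (fibAlpha p ∣ x ↔ fibAlpha p ∣ y) := by
    intro x y c hsum
    have hs : fibAlpha p ∣ (p+1) * c := hα1.trans (Dvd.intro c rfl)
    subst hsum
    constructor
    · intro hx
      have h2 := Nat.dvd_sub hx hs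
      have h3 : y + (p+1)*c - (p+1)*c = y := by omega
      rwa [h3] at h2
    · intro hy
      exact Nat.dvd_add hy hs
  -- main equality engine
  have main_eq : ∀ x y : ℕ, 0 < x → 0 < y → ¬ p ∣ x → ¬ p ∣ y →
      (fibAlpha p ∣ x ↔ fibAlpha p ∣ y) →
      padicValNat p (Nat.fib x) = padicValNat p (Nat.fib y) := by
    intro x y hx hy hpx hpy hiff
    rw [master hx, master hy, padicValNat.eq_zero_of_not_dvd hpx,
      padicValNat.eq_zero_of_not_dvd hpy]
    by_cases hd : fibAlpha p ∣ x
    · rw [if_pos hd, if_pos (hiff.mp hd)]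
    · rw [if_neg hd, if_neg (fun hc => hd (hiff.mpr hc))]
  -- non-divisibility of the main index
  have hpm : ∀ i' j' : ℕ, j' + 1 < p → ¬ p ∣ p * (p * n + i') + j' + 1 := by
    intro i' j' hj' hc
    have h1 : p ∣ p * (p * n + i') := Dvd.intro _ rfl
    have h2 := Nat.dvd_sub hc h1
    have h3 : p * (p * n + i') + j' + 1 - p * (p * n + i') = j' + 1 := by omega
    rw [h3] at h2
    have := Nat.le_of_dvd (by omega) h2
    omega
  refine ⟨?_, ?_, ?_, ?_⟩
  · -- case i < j
    intro hij
    apply main_eq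
    · omega
    · omega
    · exact hpm i j (by omega)
    · -- ¬ p ∣ m'
      intro hc
      have h1 : p ∣ p * n := Dvd.intro _ rfl
      have h2 := Nat.dvd_sub hc h1
      have h3 : p * n + (i + (p-1) - j) + 1 - p * n = (i + (p-1) - j) + 1 := by omega
      rw [h3] at h2
      have := Nat.le_of_dvd (by omega) h2
      omega
    · apply keysum _ _ (p * n + i + 1)
      have h1 : j ≤ i + (p - 1) := by omega
      zify [h1, show 1 ≤ p by omega]
      ring
  · -- case i = j
    rintro rfl
    have h0m : ¬ p ∣ p * (p * n + i) + i + 1 := hpm i i (by omega)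
    have hiff1 : fibAlpha p ∣ p * (p * n + i) + i + 1 ↔ fibAlpha p ∣ n + 1 := by
      apply keyadd _ _ (n * (p - 1) + i)
      zify [show 1 ≤ p by omega]
      ring
    have hiff2 : fibAlpha p ∣ p * (n + 1) ↔ fibAlpha p ∣ n + 1 := by
      apply keysum _ _ (n + 1)
      ring
    rw [master (show 0 < p * (p * n + i) + i + 1 by omega),
      master (show 0 < n + 1 by omega),
      master (show 0 < p * (n + 1) by positivity)]
    have hval : padicValNat p (p * (n + 1)) = padicValNat p (n + 1) + 1 := by
      rw [padicValNat.mul hp.pos.ne' ((show n+1 ≠ 0 by omega)), padicValNat.self hp.one_lt]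
      omega
    by_cases hd : fibAlpha p ∣ n + 1
    · rw [if_pos (hiff1.mpr hd), if_pos hd, if_pos (hiff2.mpr hd),
        padicValNat.eq_zero_of_not_dvd h0m, hval]
      omega
    · rw [if_neg (fun hc => hd (hiff1.mp hc)), if_neg hd,
        if_neg (fun hc => hd (hiff2.mp hc))]
  · -- case i = j + 1
    rintro rfl
    apply main_eq
    · omega
    · omega
    · exact hpm (j+1) j (by omega)
    · intro hc
      have h1 : p ∣ p ^ 2 * n + p := ⟨p * n + 1, by ring⟩
      have h2 := Nat.dvd_sub hc h1
      have h3 : p ^ 2 * n + p + 1 - (p ^ 2 * n + p) = 1 := by omega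
      rw [h3] at h2
      have := Nat.le_of_dvd (by omega) h2
      omega
    · apply keyadd _ _ j
      ring
  · -- case j + 2 ≤ i
    intro hij
    apply main_eq
    · omega
    · omega
    · exact hpm i j (by omega)
    · intro hc
      have h1 : p ∣ p * n := Dvd.intro _ rfl
      have h2 := Nat.dvd_sub hc h1
      have h3 : p * n + (i - j - 2) + 1 - p * n = (i - j - 2) + 1 := by omega
      rw [h3] at h2
      have := Nat.le_of_dvd (by omega) h2
      omega
    · apply keysum _ _ (p * n + i)
      zify [show j ≤ i by omega, show 2 ≤ i - j by omega]
      ring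
end

section
/- Let p ≠ 2 be a prime with p ≡ 2 or 3 (mod 5) such that ν_p(F_{α(p)}) = 1. Then for all integers n ≥ 0: for each i with 0 ≤ i ≤ p − 2, ν_p(F_{p(pn+i)+p}) = 2·ν_p(F_{pn+i+1}); and ν_p(F_{p²(n+1)}) + ν_p(F_{n+1}) = 2·ν_p(F_{p(n+1)}). -/
open Finset

def fibMatrix (R : Type*) [Semiring R] : Matrix (Fin 2) (Fin 2) R := !![1, 1; 1, 0]

section FibMatrix

variable {R : Type*} [CommSemiring R]

theorem fibMatrix_pow_succ (n : ℕ) :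
    fibMatrix R ^ (n + 1) =
      !![(Nat.fib (n + 2) : R), Nat.fib (n + 1); Nat.fib (n + 1), Nat.fib n] := by
  induction n with
  | zero => simp [fibMatrix]
  | succ n ih =>
    rw [pow_succ, ih, fibMatrix, Matrix.mul_fin_two, Nat.fib_add_two (n := n + 1), Nat.fib_add_two]
    push_cast
    ext i j
    fin_cases i <;> fin_cases j <;> simp <;> ring

theorem fibMatrix_pow_apply_zero_one (n : ℕ) : (fibMatrix R ^ n) 0 1 = Nat.fib n := by
  cases n with
  | zero => simp
  | succ n => simp [fibMatrix_pow_succ]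

theorem fibMatrix_pow_succ_eq (n : ℕ) :
    fibMatrix R ^ (n + 1) = (Nat.fib (n + 1) : R) • fibMatrix R + (Nat.fib n : R) • 1 := by
  rw [fibMatrix_pow_succ, fibMatrix, Nat.fib_add_two, Matrix.one_fin_two]
  ext i j
  fin_cases i <;> fin_cases j <;> simp [add_comm]

end FibMatrix

theorem fib_mul_succ_eq_sum (k m : ℕ) :
    Nat.fib (k * (m + 1)) = ∑ j ∈ range (k + 1),
      k.choose j * Nat.fib (m + 1) ^ j * Nat.fib m ^ (k - j) * Nat.fib j := by
  have hcomm : Commute (Nat.fib (m + 1) • fibMatrix ℕ) (Nat.fib m • 1) :=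
    (Commute.one_right _).smul_right _
  rw [← Nat.cast_id (Nat.fib _), ← fibMatrix_pow_apply_zero_one, mul_comm, pow_mul,
    fibMatrix_pow_succ_eq, Nat.cast_id, Nat.cast_id, hcomm.add_pow, Matrix.sum_apply]
  refine sum_congr rfl fun j _ => ?_
  rw [smul_pow, smul_pow, one_pow, smul_mul_smul_comm, mul_one, ← Matrix.diagonal_natCast]
  simp only [Matrix.mul_diagonal, Matrix.smul_apply, smul_eq_mul, fibMatrix_pow_apply_zero_one,
    Nat.cast_id]
  ring

theorem fib_mul_succ_modEq {N k m : ℕ}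
    (h : ∀ j ∈ range (k + 1), j ≠ 1 →
      N ∣ k.choose j * Nat.fib (m + 1) ^ j * Nat.fib m ^ (k - j) * Nat.fib j) :
    Nat.fib (k * (m + 1)) ≡ k * Nat.fib (m + 1) * Nat.fib m ^ (k - 1) [MOD N] := by
  rcases k.eq_zero_or_pos with rfl | hk
  · simpa using Nat.ModEq.refl 0
  rw [fib_mul_succ_eq_sum, ← add_sum_erase _ _ (mem_range.mpr (by omega : 1 < k + 1))]
  simpa [mul_right_comm] using
    (Nat.modEq_zero_iff_dvd.mpr (dvd_sum fun j hj => h j (mem_of_mem_erase hj)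
      (ne_of_mem_erase hj))).add_left (k * Nat.fib (m + 1) * Nat.fib m ^ (k - 1))

theorem fib_mul_succ_modEq_sq (k m : ℕ) :
    Nat.fib (k * (m + 1)) ≡ k * Nat.fib (m + 1) * Nat.fib m ^ (k - 1)
      [MOD Nat.fib (m + 1) ^ 2] := by
  refine fib_mul_succ_modEq fun j _ hj1 => ?_
  rcases j.eq_zero_or_pos with rfl | hj0
  · simp
  exact ((pow_dvd_pow _ (by omega)).mul_left _).mul_right _ |>.mul_right _

theorem cast_fib_prime_mul_succ {R : Type*} [CommRing R] (p : ℕ) [Fact p.Prime] [CharP R p]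
    (m : ℕ) :
    (Nat.fib (p * (m + 1)) : R) = Nat.fib (m + 1) ^ p * Nat.fib p := by
  have hcomm : Commute ((Nat.fib (m + 1) : R) • fibMatrix R) ((Nat.fib m : R) • 1) :=
    (Commute.one_right _).smul_right _
  rw [← fibMatrix_pow_apply_zero_one, mul_comm, pow_mul, fibMatrix_pow_succ_eq,
    add_pow_char_of_commute p hcomm, smul_pow, smul_pow, one_pow]
  simp [fibMatrix_pow_apply_zero_one]

theorem cast_fib_prime_eq_five_pow {p : ℕ} [Fact p.Prime] (hp2 : p ≠ 2) :
    (Nat.fib p : ZMod p) = 5 ^ (p / 2) := by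
  set S : Matrix (Fin 2) (Fin 2) (ZMod p) := !![1, 2; 2, -1]
  have hS : S ^ 2 = (5 : ZMod p) • 1 := by
    ext i j; fin_cases i <;> fin_cases j <;> norm_num [S, sq]
  have hM : ((2 : ZMod p) • fibMatrix (ZMod p)) ^ p = (1 + S) ^ p := by
    congr 1
    ext i j; fin_cases i <;> fin_cases j <;> norm_num [S, fibMatrix]
  have hodd : p = 2 * (p / 2) + 1 := by
    have := (Fact.out : p.Prime).eq_two_or_odd; omega
  rw [smul_pow, add_pow_char_of_commute p (Commute.one_left S), one_pow] at hM
  rw [show S ^ p = S ^ (2 * (p / 2) + 1) from congrArg (S ^ ·) hodd, pow_succ, pow_mul, hS,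
    smul_pow, one_pow, smul_mul_assoc, one_mul] at hM
  have h : 2 * (Nat.fib p : ZMod p) = 5 ^ (p / 2) * 2 := by
    simpa [fibMatrix_pow_apply_zero_one, S, ZMod.pow_card] using congrFun₂ hM 0 1
  have h2 : (2 : ZMod p) ≠ 0 := by
    rw [← Nat.cast_ofNat, Ne, ZMod.natCast_eq_zero_iff]
    exact fun h => hp2 ((Nat.prime_dvd_prime_iff_eq Fact.out Nat.prime_two).mp h)
  exact mul_left_cancel₀ h2 (h.trans (mul_comm _ _))

theorem not_dvd_fib_prime {p : ℕ} [hp : Fact p.Prime] (hp2 : p ≠ 2) (hp5 : p ≠ 5) :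
    ¬ p ∣ Nat.fib p := by
  rw [← ZMod.natCast_eq_zero_iff, cast_fib_prime_eq_five_pow hp2, ← Nat.cast_ofNat,
    ← Nat.cast_pow, ZMod.natCast_eq_zero_iff]
  exact fun h => hp5 ((Nat.prime_dvd_prime_iff_eq hp.out (by norm_num)).mp
    (hp.out.dvd_of_dvd_pow h))

section Valuation

variable {p : ℕ} [hp : Fact p.Prime]

theorem padicValNat_eq_of_modEq {x y N : ℕ} (hy : y ≠ 0) (hxy : x ≡ y [MOD N])
    (hN : p ^ (padicValNat p y + 1) ∣ N) : padicValNat p x = padicValNat p y := by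
  have hdvd d (hd : d ∣ p ^ (padicValNat p y + 1)) : d ∣ x ↔ d ∣ y :=
    hxy.dvd_iff (hd.trans hN)
  have hx_succ : ¬ p ^ (padicValNat p y + 1) ∣ x := by
    rw [hdvd _ dvd_rfl]
    exact pow_succ_padicValNat_not_dvd hy
  have hx0 : x ≠ 0 := by
    rintro rfl
    exact hx_succ (dvd_zero _)
  have hx : p ^ padicValNat p y ∣ x :=
    (hdvd _ (pow_dvd_pow p (Nat.le_succ _))).mpr pow_padicValNat_dvd
  rw [padicValNat_dvd_iff_le hx0] at hx hx_succ
  omega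

theorem fib_prime_mul_succ_modEq (hp2 : p ≠ 2) {m : ℕ} (h : p ∣ Nat.fib (m + 1)) :
    Nat.fib (p * (m + 1)) ≡ p * Nat.fib (m + 1) * Nat.fib m ^ (p - 1)
      [MOD p * Nat.fib (m + 1) ^ 2] := by
  have hp3 : 3 ≤ p := by have := hp.out.two_le; omega
  refine fib_mul_succ_modEq fun j hj hj1 => ?_
  rcases j.eq_zero_or_pos with rfl | hj0
  · simp
  rcases (Nat.lt_succ_iff.mp (mem_range.mp hj)).lt_or_eq with hjp | hjp
  · have hchoose : p ∣ p.choose j := hp.out.dvd_choose_self (by omega) hjp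
    exact ((mul_dvd_mul hchoose (pow_dvd_pow _ (by omega))).mul_right _).mul_right _
  · have hpow : p * Nat.fib (m + 1) ^ 2 ∣ Nat.fib (m + 1) ^ j := by
      rw [hjp, ← pow_sub_mul_pow _ (by omega : 2 ≤ p)]
      exact mul_dvd_mul_right (dvd_pow h (by omega)) _
    exact ((hpow.mul_left _).mul_right _).mul_right _

theorem not_dvd_fib_of_dvd_fib_succ {m : ℕ} (h : p ∣ Nat.fib (m + 1)) : ¬ p ∣ Nat.fib m :=
  fun hm => hp.out.not_dvd_one ((Nat.fib_coprime_fib_succ m).gcd_eq_one ▸ Nat.dvd_gcd hm h)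

theorem padicValNat_fib_mul_of_not_dvd {k n : ℕ} (hn : n ≠ 0) (hk : ¬ p ∣ k)
    (h : p ∣ Nat.fib n) : padicValNat p (Nat.fib (k * n)) = padicValNat p (Nat.fib n) := by
  obtain ⟨m, rfl⟩ := Nat.exists_eq_succ_of_ne_zero hn
  have hb := not_dvd_fib_of_dvd_fib_succ h
  have ha0 : Nat.fib (m + 1) ≠ 0 := by simp
  have hk0 : k ≠ 0 := by rintro rfl; exact hk (dvd_zero p)
  have hb0 : Nat.fib m ≠ 0 := by rintro h0; exact hb (h0 ▸ dvd_zero p)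
  have hval : padicValNat p (k * Nat.fib (m + 1) * Nat.fib m ^ (k - 1)) =
      padicValNat p (Nat.fib (m + 1)) := by
    rw [padicValNat.mul (mul_ne_zero hk0 ha0) (pow_ne_zero _ hb0), padicValNat.mul hk0 ha0,
      padicValNat.pow, padicValNat.eq_zero_of_not_dvd hk, padicValNat.eq_zero_of_not_dvd hb]
    ring
  rw [← hval]
  refine padicValNat_eq_of_modEq (by simp [*]) (fib_mul_succ_modEq_sq k m) ?_
  rw [hval, pow_succ, sq]
  exact mul_dvd_mul pow_padicValNat_dvd h

theorem padicValNat_fib_prime_mul (hp2 : p ≠ 2) {n : ℕ} (hn : n ≠ 0) (h : p ∣ Nat.fib n) :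
    padicValNat p (Nat.fib (p * n)) = padicValNat p (Nat.fib n) + 1 := by
  obtain ⟨m, rfl⟩ := Nat.exists_eq_succ_of_ne_zero hn
  have hb := not_dvd_fib_of_dvd_fib_succ h
  have ha0 : Nat.fib (m + 1) ≠ 0 := by simp
  have hb0 : Nat.fib m ≠ 0 := by rintro h0; exact hb (h0 ▸ dvd_zero p)
  have hval : padicValNat p (p * Nat.fib (m + 1) * Nat.fib m ^ (p - 1)) =
      padicValNat p (Nat.fib (m + 1)) + 1 := by
    rw [padicValNat.mul (mul_ne_zero hp.out.ne_zero ha0) (pow_ne_zero _ hb0),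
      padicValNat.mul hp.out.ne_zero ha0, padicValNat.pow, padicValNat.self hp.out.one_lt,
      padicValNat.eq_zero_of_not_dvd hb]
    ring
  rw [← hval]
  refine padicValNat_eq_of_modEq (by simp [*, hp.out.ne_zero])
    (fib_prime_mul_succ_modEq hp2 h) ?_
  rw [hval, pow_succ, pow_succ, mul_comm _ p, sq]
  exact mul_dvd_mul_left p (mul_dvd_mul pow_padicValNat_dvd h)

theorem padicValNat_fib_prime_pow_mul_of_dvd (hp2 : p ≠ 2) {n : ℕ} (hn : n ≠ 0)
    (h : p ∣ Nat.fib n) (e : ℕ) :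
    padicValNat p (Nat.fib (p ^ e * n)) = padicValNat p (Nat.fib n) + e := by
  induction e with
  | zero => simp
  | succ e ih =>
    have hdvd : p ∣ Nat.fib (p ^ e * n) := h.trans (Nat.fib_dvd _ _ (dvd_mul_left n _))
    rw [pow_succ', mul_assoc, padicValNat_fib_prime_mul hp2 (by simp [hn, hp.out.ne_zero]) hdvd,
      ih, add_assoc]

theorem padicValNat_fib_mul (hp2 : p ≠ 2) {k n : ℕ} (hk : k ≠ 0) (hn : n ≠ 0)
    (h : p ∣ Nat.fib n) :
    padicValNat p (Nat.fib (k * n)) = padicValNat p (Nat.fib n) + padicValNat p k := by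
  obtain ⟨e, k, hpk, rfl⟩ := Nat.exists_eq_pow_mul_and_not_dvd hk p hp.out.ne_one
  have hk0 : k ≠ 0 := by rintro rfl; exact hpk (dvd_zero p)
  rw [padicValNat.mul (by simp [hp.out.ne_zero]) hk0, padicValNat.prime_pow,
    padicValNat.eq_zero_of_not_dvd hpk, add_zero, mul_assoc,
    padicValNat_fib_prime_pow_mul_of_dvd hp2 (mul_ne_zero hk0 hn)
      (h.trans (Nat.fib_dvd _ _ (dvd_mul_left n k))),
    padicValNat_fib_mul_of_not_dvd hn hpk h]

end Valuation

section RankOfApparition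

variable {p : ℕ}

theorem dvd_fib_fibAlpha (hα : 0 < fibAlpha p) : p ∣ Nat.fib (fibAlpha p) :=
  (Nat.sInf_mem (Nat.nonempty_of_pos_sInf hα)).2

theorem fibAlpha_le {n : ℕ} (hn : 0 < n) (h : p ∣ Nat.fib n) : fibAlpha p ≤ n :=
  Nat.sInf_le ⟨hn, h⟩

theorem dvd_fib_iff_fibAlpha_dvd (hα : 0 < fibAlpha p) {n : ℕ} :
    p ∣ Nat.fib n ↔ fibAlpha p ∣ n := by
  refine ⟨fun h => ?_, fun h => (dvd_fib_fibAlpha hα).trans (Nat.fib_dvd _ _ h)⟩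
  rcases n.eq_zero_or_pos with rfl | hn
  · exact dvd_zero _
  have hgcd : p ∣ Nat.fib (Nat.gcd n (fibAlpha p)) := by
    rw [Nat.fib_gcd]
    exact Nat.dvd_gcd h (dvd_fib_fibAlpha hα)
  have hle := fibAlpha_le (Nat.gcd_pos_of_pos_left _ hn) hgcd
  have heq : Nat.gcd n (fibAlpha p) = fibAlpha p :=
    le_antisymm (Nat.le_of_dvd hα (Nat.gcd_dvd_right _ _)) hle
  exact heq ▸ Nat.gcd_dvd_left _ _

variable [hp : Fact p.Prime]

theorem not_dvd_fibAlpha (hp2 : p ≠ 2) (hp5 : p ≠ 5) (hα : 0 < fibAlpha p) :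
    ¬ p ∣ fibAlpha p := by
  rintro ⟨β, hβ⟩
  obtain ⟨m, rfl⟩ := Nat.exists_eq_succ_of_ne_zero (by rintro rfl; omega : β ≠ 0)
  have hzero := (ZMod.natCast_eq_zero_iff _ p).mpr (dvd_fib_fibAlpha hα)
  rw [hβ, cast_fib_prime_mul_succ, mul_eq_zero, pow_eq_zero_iff hp.out.ne_zero,
    ZMod.natCast_eq_zero_iff, ZMod.natCast_eq_zero_iff] at hzero
  rcases hzero with h | h
  · have := fibAlpha_le m.succ_pos h
    have := hp.out.two_le
    nlinarith
  · exact not_dvd_fib_prime hp2 hp5 h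

theorem padicValNat_fib_of_fibAlpha_dvd (hp2 : p ≠ 2) (hp5 : p ≠ 5) (hα : 0 < fibAlpha p)
    {n : ℕ} (hn : n ≠ 0) (h : fibAlpha p ∣ n) :
    padicValNat p (Nat.fib n) = padicValNat p (Nat.fib (fibAlpha p)) + padicValNat p n := by
  obtain ⟨k, rfl⟩ := h
  have hk : k ≠ 0 := by rintro rfl; simp at hn
  rw [mul_comm, padicValNat_fib_mul hp2 hk hα.ne' (dvd_fib_fibAlpha hα),
    padicValNat.mul hk hα.ne', padicValNat.eq_zero_of_not_dvd (not_dvd_fibAlpha hp2 hp5 hα),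
    add_zero]

theorem padicValNat_fib_prime_pow_mul (hp2 : p ≠ 2) (hp5 : p ≠ 5) (hα : 0 < fibAlpha p)
    (e : ℕ) {m : ℕ} (hm : m ≠ 0) :
    padicValNat p (Nat.fib (p ^ e * m)) =
      if fibAlpha p ∣ m then padicValNat p (Nat.fib (fibAlpha p)) + e + padicValNat p m
      else 0 := by
  have hcop : Nat.Coprime (fibAlpha p) (p ^ e) :=
    ((hp.out.coprime_iff_not_dvd.mpr (not_dvd_fibAlpha hp2 hp5 hα)).pow_left e).symm
  split_ifs with hd
  · rw [padicValNat_fib_of_fibAlpha_dvd hp2 hp5 hα (by simp [hm, hp.out.ne_zero])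
      (hd.mul_left _), padicValNat.mul (by simp [hp.out.ne_zero]) hm, padicValNat.prime_pow,
      add_assoc]
  · refine padicValNat.eq_zero_of_not_dvd fun hdvd => hd ?_
    exact hcop.dvd_of_dvd_mul_left ((dvd_fib_iff_fibAlpha_dvd hα).mp hdvd)

end RankOfApparition

theorem nup_fib_last_digit_2_3 (p : ℕ) (hp : p.Prime) (hp2 : p ≠ 2)
    (h : p % 5 = 2 ∨ p % 5 = 3)
    (hwall : padicValNat p (Nat.fib (fibAlpha p)) = 1) (n : ℕ) :
    (∀ i ≤ p - 2,
      padicValNat p (Nat.fib (p * (p * n + i) + p)) =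
        2 * padicValNat p (Nat.fib (p * n + i + 1))) ∧
    (padicValNat p (Nat.fib (p ^ 2 * (n + 1))) +
        padicValNat p (Nat.fib (n + 1)) =
      2 * padicValNat p (Nat.fib (p * (n + 1)))) := by
  have : Fact p.Prime := ⟨hp⟩
  have hp5 : p ≠ 5 := by omega
  have hα : 0 < fibAlpha p := by
    by_contra h0
    rw [Nat.eq_zero_of_not_pos h0] at hwall
    simp at hwall
  have key (e m : ℕ) (hm : m ≠ 0) : padicValNat p (Nat.fib (p ^ e * m)) =
      if fibAlpha p ∣ m then 1 + e + padicValNat p m else 0 :=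
    hwall ▸ padicValNat_fib_prime_pow_mul hp2 hp5 hα e hm
  have key_one (m : ℕ) (hm : m ≠ 0) := pow_one p ▸ key 1 m hm
  have key_zero (m : ℕ) (hm : m ≠ 0) := by simpa using key 0 m hm
  refine ⟨fun i hi => ?_, ?_⟩
  · have hm : ¬ p ∣ p * n + i + 1 := by
      rw [add_assoc, Nat.dvd_add_right (dvd_mul_right p n)]
      exact Nat.not_dvd_of_pos_of_lt i.succ_pos (by omega)
    rw [show p * (p * n + i) + p = p * (p * n + i + 1) by ring, key_one _ (by omega),
      key_zero _ (by omega), padicValNat.eq_zero_of_not_dvd hm]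
    split_ifs <;> rfl
  · rw [key 2 _ (by omega), key_one _ (by omega), key_zero _ (by omega)]
    split_ifs <;> ring
end
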